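/- Let X be a real-valued integrable random variable on a probability space (Ω, F, P) and let α ∈ (0,1). Then the function s ↦ s + (1/(1-α)) · E[(X - s)^+] attains its minimum over s ∈ ℝ at s = VaR_α(X); in particular AVaR_α(X) = VaR_α(X) + (1/(1-α)) · E[(X - VaR_α(X))^+]. -/

import Mathlib

open MeasureTheory

/-- Value-at-Risk of `X` at level `t`: `VaR_t(X) = inf { x : P(X ≤ x) ≥ t }`. -/
noncomputable def VaR {Ω : Type*} [MeasurableSpace Ω] (P : Measure Ω) (t : ℝ)
    (X : Ω → ℝ) : ℝ :=
  sInf {x : ℝ | t ≤ (P {ω | X ω ≤ x}).toReal}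

/-- Average-Value-at-Risk of `X` at level `α`:
`AVaR_α(X) = (1/(1-α)) ∫_α^1 VaR_t(X) dt`. -/
noncomputable def AVaR {Ω : Type*} [MeasurableSpace Ω] (P : Measure Ω) (α : ℝ)
    (X : Ω → ℝ) : ℝ :=
  (1 - α)⁻¹ * ∫ t in α..1, VaR P t X

/-!
Let `Q` be the quantile function of the law `μ` of `X`, so that `VaR_t(X) = Q t`. On `(0,1)`
it satisfies `Q t ≤ x ↔ t ≤ F x` for the cdf `F`, hence pushes Lebesgue measure on `(0,1)`
forward to `μ`, and `E[(X - s)⁺] = ∫₀¹ (Q t - s)⁺ dt`. Therefore, for every `s`,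
`∫_α^1 Q = (1 - α) s + ∫_α^1 (Q - s) ≤ (1 - α) s + ∫_α^1 (Q - s)⁺ ≤ (1 - α) s + E[(X - s)⁺]`,
and since `Q` is nondecreasing both inequalities are equalities at `s = Q α`.
-/

open Set Filter ProbabilityTheory

/-- Outside `(0, 1)` this is a junk value: the set is unbounded below or may be empty. -/
noncomputable def quantile (μ : Measure ℝ) (t : ℝ) : ℝ := sInf {x | t ≤ cdf μ x}

section Quantile

variable {μ : Measure ℝ} {t x : ℝ}

lemma bddBelow_setOf_le_cdf (ht : 0 < t) : BddBelow {x | t ≤ cdf μ x} := by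
  obtain ⟨y, hy⟩ := ((tendsto_cdf_atBot μ).eventually (eventually_lt_nhds ht)).exists
  exact ⟨y, fun x hx => not_lt.1 fun hxy => (hx.trans ((cdf μ).mono hxy.le)).not_gt hy⟩

lemma nonempty_setOf_le_cdf (ht : t < 1) : {x | t ≤ cdf μ x}.Nonempty :=
  (((tendsto_cdf_atTop μ).eventually (eventually_gt_nhds ht)).exists).imp fun _ => le_of_lt

lemma le_cdf_quantile (ht : t ∈ Ioo 0 1) : t ≤ cdf μ (quantile μ t) := by
  have hright : ∀ y > quantile μ t, t ≤ cdf μ y := fun y hy => by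
    obtain ⟨z, hz, hzy⟩ :=
      (csInf_lt_iff (bddBelow_setOf_le_cdf ht.1) (nonempty_setOf_le_cdf ht.2)).1 hy
    exact hz.trans ((cdf μ).mono hzy.le)
  refine ge_of_tendsto (((cdf μ).right_continuous _).tendsto.mono_left
    (nhdsWithin_mono _ Ioi_subset_Ici_self)) ?_
  filter_upwards [self_mem_nhdsWithin] with y hy using hright y hy

lemma quantile_le_iff (ht : t ∈ Ioo 0 1) : quantile μ t ≤ x ↔ t ≤ cdf μ x :=
  ⟨fun h => (le_cdf_quantile ht).trans ((cdf μ).mono h),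
    fun h => csInf_le (bddBelow_setOf_le_cdf ht.1) h⟩

lemma monotoneOn_quantile : MonotoneOn (quantile μ) (Ioo 0 1) := fun _ hs _ ht hst =>
  (quantile_le_iff hs).2 (hst.trans (le_cdf_quantile ht))

lemma aemeasurable_quantile : AEMeasurable (quantile μ) (volume.restrict (Ioo 0 1)) :=
  aemeasurable_restrict_of_monotoneOn measurableSet_Ioo monotoneOn_quantile

lemma volume_Ioo_inter_Iic {a b c : ℝ} (hcb : c ≤ b) :
    volume (Ioo a b ∩ Iic c) = ENNReal.ofReal (c - a) := by
  rcases hcb.lt_or_eq with hcb | rfl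
  · have : Ioo a b ∩ Iic c = Ioc a c := by
      ext; simp only [mem_inter_iff, mem_Ioo, mem_Iic, mem_Ioc]; grind
    rw [this, Real.volume_Ioc]
  · rw [inter_eq_left.2 fun _ h => h.2.le, Real.volume_Ioo]

theorem map_quantile [IsProbabilityMeasure μ] :
    (volume.restrict (Ioo 0 1)).map (quantile μ) = μ := by
  refine (Measure.ext_of_Iic _ _ fun x => ?_).symm
  have hpre : quantile μ ⁻¹' Iic x ∩ Ioo 0 1 = Ioo 0 1 ∩ Iic (cdf μ x) := by
    ext t
    simp only [mem_inter_iff, mem_preimage, mem_Iic]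
    exact ⟨fun h => ⟨h.2, (quantile_le_iff h.2).1 h.1⟩,
      fun h => ⟨(quantile_le_iff h.1).2 h.2, h.1⟩⟩
  rw [Measure.map_apply_of_aemeasurable aemeasurable_quantile measurableSet_Iic,
    Measure.restrict_apply' measurableSet_Ioo, hpre, volume_Ioo_inter_Iic (cdf_le_one μ x),
    sub_zero, ofReal_cdf]

lemma integral_comp_quantile [IsProbabilityMeasure μ] {g : ℝ → ℝ}
    (hg : AEStronglyMeasurable g μ) :
    ∫ t in Ioo 0 1, g (quantile μ t) = ∫ x, g x ∂μ := by
  rw [← integral_map aemeasurable_quantile (by rwa [map_quantile]), map_quantile]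

lemma integrableOn_comp_quantile_iff [IsProbabilityMeasure μ] {g : ℝ → ℝ}
    (hg : AEStronglyMeasurable g μ) :
    IntegrableOn (g ∘ quantile μ) (Ioo 0 1) ↔ Integrable g μ := by
  rw [IntegrableOn, ← integrable_map_measure (by rwa [map_quantile]) aemeasurable_quantile,
    map_quantile]

end Quantile

section TailIntegral

variable {μ : Measure ℝ} [IsProbabilityMeasure μ] {α : ℝ}

lemma integrableOn_quantile (hμ : Integrable id μ) : IntegrableOn (quantile μ) (Ioo 0 1) :=
  (integrableOn_comp_quantile_iff aestronglyMeasurable_id).2 hμ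

lemma integral_posPart_sub_eq_setIntegral_quantile (s : ℝ) :
    ∫ x, max (x - s) 0 ∂μ = ∫ t in Ioo 0 1, max (quantile μ t - s) 0 :=
  (integral_comp_quantile (g := fun x => max (x - s) 0) (by fun_prop)).symm

lemma setIntegral_quantile_eq_mul_add (hμ : Integrable id μ) (hα₀ : 0 ≤ α) (hα₁ : α ≤ 1)
    (s : ℝ) :
    ∫ t in Ioo α 1, quantile μ t = (1 - α) * s + ∫ t in Ioo α 1, (quantile μ t - s) := by
  have hQ := (integrableOn_quantile hμ).mono_set (Ioo_subset_Ioo_left hα₀)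
  rw [integral_sub hQ (integrable_const s), setIntegral_const, smul_eq_mul, measureReal_def,
    Real.volume_Ioo, ENNReal.toReal_ofReal (sub_nonneg.2 hα₁)]
  ring

theorem setIntegral_quantile_le (hμ : Integrable id μ) (hα₀ : 0 ≤ α) (hα₁ : α ≤ 1) (s : ℝ) :
    ∫ t in Ioo α 1, quantile μ t ≤ (1 - α) * s + ∫ x, max (x - s) 0 ∂μ := by
  have hQs : IntegrableOn (fun t => max (quantile μ t - s) 0) (Ioo 0 1) :=
    ((integrableOn_quantile hμ).sub (integrable_const s)).pos_part
  have hsub : Ioo α 1 ⊆ Ioo 0 1 := Ioo_subset_Ioo_left hα₀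
  calc ∫ t in Ioo α 1, quantile μ t
      = (1 - α) * s + ∫ t in Ioo α 1, (quantile μ t - s) :=
        setIntegral_quantile_eq_mul_add hμ hα₀ hα₁ s
    _ ≤ (1 - α) * s + ∫ t in Ioo α 1, max (quantile μ t - s) 0 :=
        add_le_add le_rfl <| integral_mono
          (((integrableOn_quantile hμ).sub (integrable_const s)).mono_set hsub)
          (hQs.mono_set hsub) fun t => le_max_left _ _
    _ ≤ (1 - α) * s + ∫ t in Ioo 0 1, max (quantile μ t - s) 0 :=
        add_le_add le_rfl <| setIntegral_mono_set hQs (ae_of_all _ fun t => le_max_right _ _)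
          hsub.eventuallyLE
    _ = (1 - α) * s + ∫ x, max (x - s) 0 ∂μ := by
        rw [integral_posPart_sub_eq_setIntegral_quantile]

theorem setIntegral_quantile_eq (hμ : Integrable id μ) (hα : α ∈ Ioo 0 1) :
    ∫ t in Ioo α 1, quantile μ t =
      (1 - α) * quantile μ α + ∫ x, max (x - quantile μ α) 0 ∂μ := by
  have hsub : Ioo α 1 ⊆ Ioo 0 1 := Ioo_subset_Ioo_left hα.1.le
  calc ∫ t in Ioo α 1, quantile μ t
      = (1 - α) * quantile μ α + ∫ t in Ioo α 1, (quantile μ t - quantile μ α) :=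
        setIntegral_quantile_eq_mul_add hμ hα.1.le hα.2.le _
    _ = (1 - α) * quantile μ α + ∫ t in Ioo α 1, max (quantile μ t - quantile μ α) 0 := by
        congr 1
        refine setIntegral_congr_fun measurableSet_Ioo fun t ht => (max_eq_left ?_).symm
        exact sub_nonneg.2 (monotoneOn_quantile hα (hsub ht) ht.1.le)
    _ = (1 - α) * quantile μ α + ∫ t in Ioo 0 1, max (quantile μ t - quantile μ α) 0 := by
        congr 1
        refine (setIntegral_eq_of_subset_of_forall_sdiff_eq_zero measurableSet_Ioo hsub
          fun t ⟨ht, htα⟩ => max_eq_right (sub_nonpos.2 ?_)).symm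
        exact monotoneOn_quantile ht hα (not_lt.1 fun h => htα ⟨h, ht.2⟩)
    _ = (1 - α) * quantile μ α + ∫ x, max (x - quantile μ α) 0 ∂μ := by
        rw [integral_posPart_sub_eq_setIntegral_quantile]

end TailIntegral

section RandomVariable

variable {Ω : Type*} [MeasurableSpace Ω] {P : Measure Ω} {X : Ω → ℝ}

lemma integral_posPart_sub_map (hX : AEMeasurable X P) (s : ℝ) :
    ∫ ω, max (X ω - s) 0 ∂P = ∫ x, max (x - s) 0 ∂(P.map X) :=
  (integral_map (f := fun x => max (x - s) 0) hX (by fun_prop)).symm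

variable [IsProbabilityMeasure P]

lemma cdf_map (hX : AEMeasurable X P) (x : ℝ) :
    cdf (P.map X) x = (P {ω | X ω ≤ x}).toReal := by
  have := Measure.isProbabilityMeasure_map hX
  rw [cdf_eq_real, measureReal_def, Measure.map_apply_of_aemeasurable hX measurableSet_Iic]
  rfl

lemma VaR_eq_quantile_map (hX : AEMeasurable X P) (t : ℝ) :
    VaR P t X = quantile (P.map X) t := by
  simp only [VaR, quantile, cdf_map hX]

lemma AVaR_eq_setIntegral_quantile_map (hX : AEMeasurable X P) {α : ℝ} (hα : α ≤ 1) :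
    AVaR P α X = (1 - α)⁻¹ * ∫ t in Ioo α 1, quantile (P.map X) t := by
  simp only [AVaR, intervalIntegral.integral_of_le hα, integral_Ioc_eq_integral_Ioo,
    VaR_eq_quantile_map hX]

end RandomVariable

/-- The function `s ↦ s + (1/(1-α)) E[(X - s)⁺]` attains its minimum over `s ∈ ℝ`
at `s = VaR_α(X)`; in particular `AVaR_α(X) = VaR_α(X) + (1/(1-α)) E[(X - VaR_α(X))⁺]`. -/
theorem avar_min_attained_at_var
    {Ω : Type*} [MeasurableSpace Ω] (P : Measure Ω) [IsProbabilityMeasure P]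
    (X : Ω → ℝ) (hX : Integrable X P) (α : ℝ) (hα : α ∈ Set.Ioo (0 : ℝ) 1) :
    (∀ s : ℝ,
      VaR P α X + (1 - α)⁻¹ * ∫ ω, max (X ω - VaR P α X) 0 ∂P ≤
        s + (1 - α)⁻¹ * ∫ ω, max (X ω - s) 0 ∂P) ∧
    AVaR P α X = VaR P α X + (1 - α)⁻¹ * ∫ ω, max (X ω - VaR P α X) 0 ∂P := by
  have hXm := hX.aemeasurable
  have := Measure.isProbabilityMeasure_map hXm
  have hμ : Integrable id (P.map X) := (integrable_map_measure aestronglyMeasurable_id hXm).2 hX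
  have h1α : 0 < 1 - α := sub_pos.2 hα.2
  have hAVaR := AVaR_eq_setIntegral_quantile_map hXm hα.2.le
  have hattain : AVaR P α X = VaR P α X + (1 - α)⁻¹ * ∫ ω, max (X ω - VaR P α X) 0 ∂P := by
    rw [hAVaR, setIntegral_quantile_eq hμ hα, VaR_eq_quantile_map hXm,
      integral_posPart_sub_map hXm]
    field_simp
  have hbound (s : ℝ) : AVaR P α X ≤ s + (1 - α)⁻¹ * ∫ ω, max (X ω - s) 0 ∂P := by
    rw [hAVaR, integral_posPart_sub_map hXm, inv_mul_le_iff₀ h1α, mul_add,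
      mul_inv_cancel_left₀ h1α.ne']
    exact setIntegral_quantile_le hμ hα.1.le hα.2.le s
  exact ⟨fun s => hattain.symm.le.trans (hbound s), hattain⟩
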